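/- There exists a nonzero polynomial P ∈ ℂ[λ,μ] such that whenever P(λ,μ) ≠ 0 and (q,a,c,d) ∈ ℂ⁴ satisfies q² + 2λq + 1 = 0, a(1 + λq) = −(λ + q), 2μcd = 3a² + 3, and c² + d² + 2a² − 2λa + 2 = 0, the following holds with W = W(q,a,c,d): (i) every vector B ∈ ℂ⁸ such that ∇Qᵢ(P)·B = 0 for all P ∈ W and all i = 1,2,3,4 lies in W; and (ii) there exists a ℂ-linear map β : W → ℂ⁸ whose image is not contained in W such that ∇Qᵢ(P)·β(P) = 0 for every P ∈ W and every i = 1,2,3,4. (This expresses that the normal bundle of the line W on X_{λ,μ} is O ⊕ O(−2).) -/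

import Mathlib

noncomputable section

/-- `Q₁ = x₀²+x₁²+x₂²+x₃²+x₄²+x₅² − 2μx₆x₇`. -/
def Q1 (m : ℂ) (x : Fin 8 → ℂ) : ℂ :=
  x 0 ^ 2 + x 1 ^ 2 + x 2 ^ 2 + x 3 ^ 2 + x 4 ^ 2 + x 5 ^ 2 - 2 * m * x 6 * x 7

/-- `Q₂ = x₀²+x₁²+x₂²+x₃²+x₆²+x₇² − 2λx₄x₅`. -/
def Q2 (l : ℂ) (x : Fin 8 → ℂ) : ℂ :=
  x 0 ^ 2 + x 1 ^ 2 + x 2 ^ 2 + x 3 ^ 2 + x 6 ^ 2 + x 7 ^ 2 - 2 * l * x 4 * x 5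

/-- `Q₃ = x₀²+x₁²+x₄²+x₅²+x₆²+x₇² − 2λx₂x₃`. -/
def Q3 (l : ℂ) (x : Fin 8 → ℂ) : ℂ :=
  x 0 ^ 2 + x 1 ^ 2 + x 4 ^ 2 + x 5 ^ 2 + x 6 ^ 2 + x 7 ^ 2 - 2 * l * x 2 * x 3

/-- `Q₄ = x₂²+x₃²+x₄²+x₅²+x₆²+x₇² − 2λx₀x₁`. -/
def Q4 (l : ℂ) (x : Fin 8 → ℂ) : ℂ :=
  x 2 ^ 2 + x 3 ^ 2 + x 4 ^ 2 + x 5 ^ 2 + x 6 ^ 2 + x 7 ^ 2 - 2 * l * x 0 * x 1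

/-- The plane `W(q,a,c,d) ⊆ ℂ⁸` spanned by `u = (1,q,ω,ωq,ω²,ω²q,0,0)` and
`v = (a,1,a,1,a,1,c,d)`, for `ω` a primitive cube root of unity. -/
def linePlane8 (w q a c d : ℂ) : Submodule ℂ (Fin 8 → ℂ) :=
  Submodule.span ℂ
    {![1, q, w, w * q, w ^ 2, w ^ 2 * q, 0, 0], ![a, 1, a, 1, a, 1, c, d]}

/-- The system of equations characterizing the 8 lines of Lemma 4.1. -/
def lineEqs8 (l m q a c d : ℂ) : Prop :=
  q ^ 2 + 2 * l * q + 1 = 0 ∧ a * (1 + l * q) = -(l + q) ∧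
    2 * m * c * d = 3 * a ^ 2 + 3 ∧ c ^ 2 + d ^ 2 + 2 * a ^ 2 - 2 * l * a + 2 = 0

/-- The subgroup `G' ≤ S₈` generated by the transpositions `(0 1)`, `(2 3)`, `(4 5)`,
`(6 7)` and by the simultaneous block permutations of the pairs `{0,1}`, `{2,3}`,
`{4,5}` (the parallel copy of `S₃`, generated by its two block transpositions
`(0 2)(1 3)` and `(2 4)(3 5)`). -/
def Gperm8 : Subgroup (Equiv.Perm (Fin 8)) :=
  Subgroup.closure
    {Equiv.swap 0 1, Equiv.swap 2 3, Equiv.swap 4 5, Equiv.swap 6 7,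
      Equiv.swap 0 2 * Equiv.swap 1 3, Equiv.swap 2 4 * Equiv.swap 3 5}

/-- The subgroup `H' ≤ (ℂˣ)⁸` generated by `ε₁, ε₂, ε₃`. -/
def Hsigns8 : Subgroup (Fin 8 → ℂˣ) :=
  Subgroup.closure
    {![-1, -1, 1, 1, 1, 1, 1, 1], ![1, 1, -1, -1, 1, 1, 1, 1],
      ![1, 1, 1, 1, -1, -1, 1, 1]}

/-- Componentwise multiplication by `h ∈ (ℂˣ)⁸` as a linear map. -/
def diagMap8 (h : Fin 8 → ℂˣ) : (Fin 8 → ℂ) →ₗ[ℂ] (Fin 8 → ℂ) :=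
  LinearMap.pi fun i => (h i : ℂ) • LinearMap.proj i

/-- Coordinate permutation `x ↦ x ∘ σ` as a linear map. -/
def permMap8 (σ : Equiv.Perm (Fin 8)) : (Fin 8 → ℂ) →ₗ[ℂ] (Fin 8 → ℂ) :=
  LinearMap.funLeft ℂ ℂ σ

/-!
On a line the equations force `a q = 1`, `a + q = -2λ`, `c² + d² = 6λa` and `2μcd = -6λa`, so
away from `λ (λ² - 1) (μ² - 1) = 0` we have `λa ≠ 0` and `c² ≠ d²`. Then:

(i) the six conditions `∇Qᵢ(u)·B = 0` (`i = 1,…,4`) and `∇Q₁(v)·B = ∇Q₂(v)·B = 0` already cut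
the tangent directions down to `W`;

(ii) the linear map `u ↦ (0,…,0,c,d)`, `v ↦ (a², a, a²ω², aω², a²ω, aω, 0, 0)` is a normal
field: `∇Qᵢ(su + tv)·β(su + tv)` is a quadratic form in `(s, t)` whose coefficients vanish by
the relations above and `ω² + ω + 1 = 0`.
-/

section Gradient

variable {𝕜 ι : Type*} [NontriviallyNormedField 𝕜] [Fintype ι]

theorem fderiv_sum_sq_sub_mul_apply (c : 𝕜) (i₀ i₁ i₂ i₃ i₄ i₅ j₀ j₁ : ι) (x B : ι → 𝕜) :
    fderiv 𝕜 (fun y : ι → 𝕜 => y i₀ ^ 2 + y i₁ ^ 2 + y i₂ ^ 2 + y i₃ ^ 2 + y i₄ ^ 2 + y i₅ ^ 2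
        - 2 * c * y j₀ * y j₁) x B =
      2 * x i₀ * B i₀ + 2 * x i₁ * B i₁ + 2 * x i₂ * B i₂ + 2 * x i₃ * B i₃ + 2 * x i₄ * B i₄
        + 2 * x i₅ * B i₅ - 2 * c * (x j₀ * B j₁ + x j₁ * B j₀) := by
  have hsq (i : ι) := (hasFDerivAt_apply (𝕜 := 𝕜) i x).pow 2
  have hmul := ((hasFDerivAt_apply (𝕜 := 𝕜) j₀ x).const_mul (2 * c)).fun_mul
    (hasFDerivAt_apply j₁ x)
  rw [(((((((hsq i₀).fun_add (hsq i₁)).fun_add (hsq i₂)).fun_add (hsq i₃)).fun_add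
    (hsq i₄)).fun_add (hsq i₅)).fun_sub hmul).fderiv]
  simp only [add_apply, sub_apply, FunLike.coe_smul, Pi.smul_apply,
    ContinuousLinearMap.proj_apply, smul_eq_mul, nsmul_eq_mul]
  ring

end Gradient

theorem fderiv_Q1_apply (m : ℂ) (x B : Fin 8 → ℂ) :
    fderiv ℂ (Q1 m) x B = 2 * x 0 * B 0 + 2 * x 1 * B 1 + 2 * x 2 * B 2 + 2 * x 3 * B 3
      + 2 * x 4 * B 4 + 2 * x 5 * B 5 - 2 * m * (x 6 * B 7 + x 7 * B 6) :=
  fderiv_sum_sq_sub_mul_apply m 0 1 2 3 4 5 6 7 x B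

theorem fderiv_Q2_apply (l : ℂ) (x B : Fin 8 → ℂ) :
    fderiv ℂ (Q2 l) x B = 2 * x 0 * B 0 + 2 * x 1 * B 1 + 2 * x 2 * B 2 + 2 * x 3 * B 3
      + 2 * x 6 * B 6 + 2 * x 7 * B 7 - 2 * l * (x 4 * B 5 + x 5 * B 4) :=
  fderiv_sum_sq_sub_mul_apply l 0 1 2 3 6 7 4 5 x B

theorem fderiv_Q3_apply (l : ℂ) (x B : Fin 8 → ℂ) :
    fderiv ℂ (Q3 l) x B = 2 * x 0 * B 0 + 2 * x 1 * B 1 + 2 * x 4 * B 4 + 2 * x 5 * B 5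
      + 2 * x 6 * B 6 + 2 * x 7 * B 7 - 2 * l * (x 2 * B 3 + x 3 * B 2) :=
  fderiv_sum_sq_sub_mul_apply l 0 1 4 5 6 7 2 3 x B

theorem fderiv_Q4_apply (l : ℂ) (x B : Fin 8 → ℂ) :
    fderiv ℂ (Q4 l) x B = 2 * x 2 * B 2 + 2 * x 3 * B 3 + 2 * x 4 * B 4 + 2 * x 5 * B 5
      + 2 * x 6 * B 6 + 2 * x 7 * B 7 - 2 * l * (x 0 * B 1 + x 1 * B 0) :=
  fderiv_sum_sq_sub_mul_apply l 2 3 4 5 6 7 0 1 x B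

theorem IsPrimitiveRoot.sq_add_self_add_one_eq_zero {w : ℂ} (hw : IsPrimitiveRoot w 3) :
    w ^ 2 + w + 1 = 0 := by
  have h := hw.geom_sum_eq_zero (by norm_num)
  simp only [Finset.sum_range_succ, Finset.sum_range_zero] at h
  linear_combination h

def lineU (w q : ℂ) : Fin 8 → ℂ := ![1, q, w, w * q, w ^ 2, w ^ 2 * q, 0, 0]

def lineV (a c d : ℂ) : Fin 8 → ℂ := ![a, 1, a, 1, a, 1, c, d]

theorem lineU_mem_linePlane8 (w q a c d : ℂ) : lineU w q ∈ linePlane8 w q a c d :=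
  Submodule.subset_span (Set.mem_insert _ _)

theorem lineV_mem_linePlane8 (w q a c d : ℂ) : lineV a c d ∈ linePlane8 w q a c d :=
  Submodule.subset_span (Set.mem_insert_of_mem _ rfl)

/-- As `(1, ω, ω²)` is isotropic, `hodd` puts `(B₁, B₃, B₅)` in the span of `(1, 1, 1)` and
`(1, ω, ω²)`. -/
theorem mem_linePlane8_of_coords {w q a c d : ℂ} (hw : w ^ 2 + w + 1 = 0) (haq : a * q = 1)
    {B : Fin 8 → ℂ} (h0 : B 0 = a * B 1) (h2 : B 2 = a * B 3) (h4 : B 4 = a * B 5)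
    (hodd : B 1 + w * B 3 + w ^ 2 * B 5 = 0) (h6 : B 6 = (B 1 + B 3 + B 5) / 3 * c)
    (h7 : B 7 = (B 1 + B 3 + B 5) / 3 * d) : B ∈ linePlane8 w q a c d := by
  refine Submodule.mem_span_pair.mpr
    ⟨a * (B 1 - (B 1 + B 3 + B 5) / 3), (B 1 + B 3 + B 5) / 3, funext fun i => ?_⟩
  fin_cases i <;>
    simp only [Pi.add_apply, Pi.smul_apply, smul_eq_mul, Matrix.cons_val, Fin.reduceFinMk,
      Fin.isValue]
  · linear_combination -h0
  · linear_combination (B 1 - (B 1 + B 3 + B 5) / 3) * haq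
  · linear_combination (a * (1 + 2 * w) / 3) * hodd
      + (a * (-2 * B 3 + B 5 * (1 - 2 * w)) / 3) * hw - h2
  · linear_combination ((1 + 2 * w) / 3) * hodd + ((-2 * B 3 + B 5 * (1 - 2 * w)) / 3) * hw
      + (w * B 1 - w * (B 1 + B 3 + B 5) / 3) * haq
  · linear_combination (a * (1 + 2 * w ^ 2) / 3) * hodd
      + (a / 3) * ((1 - 2 * w) * B 3 - 2 * (w ^ 2 - w + 1) * B 5) * hw - h4
  · linear_combination ((1 + 2 * w ^ 2) / 3) * hodd
      + (1 / 3) * ((1 - 2 * w) * B 3 - 2 * (w ^ 2 - w + 1) * B 5) * hw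
      + (w ^ 2 * (B 1 - (B 1 + B 3 + B 5) / 3)) * haq
  · linear_combination -h6
  · linear_combination -h7

def normalU (c d : ℂ) : Fin 8 → ℂ := ![0, 0, 0, 0, 0, 0, c, d]

def normalV (w a : ℂ) : Fin 8 → ℂ := ![a ^ 2, a, a ^ 2 * w ^ 2, a * w ^ 2, a ^ 2 * w, a * w, 0, 0]

/-- On `W` it sends `s • u + t • v` to `s • normalU c d + t • normalV w a`: the coordinate `s` is
read off as `(x₀ - x₂) / (1 - ω)` and `t` as `(c x₆ + d x₇) / (c² + d²)`, with `c² + d² = 6λa`. -/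
def normalLift (w l a c d : ℂ) : (Fin 8 → ℂ) →ₗ[ℂ] (Fin 8 → ℂ) :=
  let x (i : Fin 8) : (Fin 8 → ℂ) →ₗ[ℂ] ℂ := LinearMap.proj i
  ((1 - w)⁻¹ • (x 0 - x 2)).smulRight (normalU c d)
    + ((6 * l * a)⁻¹ • (c • x 6 + d • x 7)).smulRight (normalV w a)

theorem normalLift_lineU {w : ℂ} (hw : w ≠ 1) (l q a c d : ℂ) :
    normalLift w l a c d (lineU w q) = normalU c d := by
  simp [normalLift, lineU, inv_mul_cancel₀ (sub_ne_zero.mpr hw.symm)]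

theorem normalLift_lineV {w l a c d : ℂ} (hcd : c ^ 2 + d ^ 2 = 6 * l * a)
    (hla : 6 * l * a ≠ 0) : normalLift w l a c d (lineV a c d) = normalV w a := by
  simp only [normalLift, lineV, LinearMap.add_apply, LinearMap.smulRight_apply,
    LinearMap.smul_apply, LinearMap.sub_apply, LinearMap.proj_apply, Matrix.cons_val,
    smul_eq_mul, sub_self, mul_zero, zero_smul, zero_add]
  rw [← sq, ← sq, hcd, inv_mul_cancel₀ hla, one_smul]

theorem normalU_notMem_linePlane8 {w q a c d : ℂ} (hw : w ≠ 1) (ha : a ≠ 0)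
    (hcd : c ≠ 0 ∨ d ≠ 0) : normalU c d ∉ linePlane8 w q a c d := by
  intro hmem
  obtain ⟨s, t, hst⟩ := Submodule.mem_span_pair.mp hmem
  have h0 : s * 1 + t * a = 0 := congrFun hst 0
  have h2 : s * w + t * a = 0 := congrFun hst 2
  have h6 : s * 0 + t * c = c := congrFun hst 6
  have h7 : s * 0 + t * d = d := congrFun hst 7
  have hs : s = 0 := by
    have : s * (1 - w) = 0 := by linear_combination h0 - h2
    exact (mul_eq_zero.mp this).resolve_right (sub_ne_zero.mpr hw.symm)
  have ht : t = 0 := by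
    subst hs
    exact (mul_eq_zero.mp (by linear_combination h0)).resolve_right ha
  subst hs ht
  rcases hcd with hc | hd
  · exact hc (by linear_combination -h6)
  · exact hd (by linear_combination -h7)

namespace lineEqs8

variable {l m q a c d : ℂ}

theorem one_add_mul_ne_zero (h : lineEqs8 l m q a c d) (hl : l ^ 2 ≠ 1) : 1 + l * q ≠ 0 := by
  intro hlq
  have hq : q ^ 2 = 1 := by linear_combination h.1 - 2 * hlq
  exact hl (by linear_combination (l * q - 1) * hlq - l ^ 2 * hq)

theorem mul_eq_one (h : lineEqs8 l m q a c d) (hl : l ^ 2 ≠ 1) : a * q = 1 := by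
  have h0 : (a * q - 1) * (1 + l * q) = 0 := by linear_combination q * h.2.1 - h.1
  linear_combination (mul_eq_zero.mp h0).resolve_right (h.one_add_mul_ne_zero hl)

/-- `a = 1/q` is the other root of `X² + 2λX + 1`. -/
theorem add_eq_neg_two_mul (h : lineEqs8 l m q a c d) (hl : l ^ 2 ≠ 1) : a + q = -(2 * l) := by
  have hq : q ≠ 0 := right_ne_zero_of_mul_eq_one (h.mul_eq_one hl)
  have h0 : (a + q + 2 * l) * q = 0 := by linear_combination h.mul_eq_one hl + h.1
  linear_combination (mul_eq_zero.mp h0).resolve_right hq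

theorem sq_add_mul_add_one_eq_zero (h : lineEqs8 l m q a c d) (hl : l ^ 2 ≠ 1) :
    a ^ 2 + 2 * l * a + 1 = 0 := by
  linear_combination a * h.add_eq_neg_two_mul hl - h.mul_eq_one hl

theorem sq_add_sq_eq (h : lineEqs8 l m q a c d) (hl : l ^ 2 ≠ 1) : c ^ 2 + d ^ 2 = 6 * l * a := by
  linear_combination h.2.2.2 - 2 * h.sq_add_mul_add_one_eq_zero hl

theorem two_mul_mul_mul_eq (h : lineEqs8 l m q a c d) (hl : l ^ 2 ≠ 1) :
    2 * m * c * d = -(6 * l * a) := by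
  linear_combination h.2.2.1 + 3 * h.sq_add_mul_add_one_eq_zero hl

theorem six_mul_mul_ne_zero (h : lineEqs8 l m q a c d) (hl0 : l ≠ 0) (hl : l ^ 2 ≠ 1) :
    6 * l * a ≠ 0 :=
  mul_ne_zero (mul_ne_zero (by norm_num) hl0) (left_ne_zero_of_mul_eq_one (h.mul_eq_one hl))

theorem sq_sub_sq_ne_zero (h : lineEqs8 l m q a c d) (hl0 : l ≠ 0) (hl : l ^ 2 ≠ 1)
    (hm : m ^ 2 ≠ 1) : c ^ 2 - d ^ 2 ≠ 0 := by
  intro hcd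
  have h0 : (6 * l * a) ^ 2 * (m ^ 2 - 1) = 0 := by
    linear_combination (2 * m * c * d - 6 * l * a) * h.two_mul_mul_mul_eq hl
      - m ^ 2 * (c ^ 2 + d ^ 2 + 6 * l * a) * h.sq_add_sq_eq hl + m ^ 2 * (c ^ 2 - d ^ 2) * hcd
  exact (mul_ne_zero (pow_ne_zero 2 (h.six_mul_mul_ne_zero hl0 hl)) (sub_ne_zero.mpr hm)) h0

theorem coords_of_fderiv_lineU_eq_zero {w : ℂ} (hw : w ^ 2 + w + 1 = 0)
    (h : lineEqs8 l m q a c d) (hl0 : l ≠ 0) (hl : l ^ 2 ≠ 1) {B : Fin 8 → ℂ}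
    (h1 : fderiv ℂ (Q1 m) (lineU w q) B = 0) (h2 : fderiv ℂ (Q2 l) (lineU w q) B = 0)
    (h3 : fderiv ℂ (Q3 l) (lineU w q) B = 0) (h4 : fderiv ℂ (Q4 l) (lineU w q) B = 0) :
    B 0 = a * B 1 ∧ B 2 = a * B 3 ∧ B 4 = a * B 5 ∧ B 1 + w * B 3 + w ^ 2 * B 5 = 0 := by
  rw [fderiv_Q1_apply] at h1
  rw [fderiv_Q2_apply] at h2
  rw [fderiv_Q3_apply] at h3
  rw [fderiv_Q4_apply] at h4
  simp only [lineU, Matrix.cons_val] at h1 h2 h3 h4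
  have hw0 : w ≠ 0 := by rintro rfl; norm_num at hw
  have hk := h.one_add_mul_ne_zero hl
  have hB0 : B 0 = a * B 1 := mul_right_cancel₀ hk <| by
    linear_combination (1 / 2) * h1 - (1 / 2) * h4 - B 1 * h.2.1
  have hB2 : B 2 = a * B 3 := mul_right_cancel₀ (mul_ne_zero hk hw0) <| by
    linear_combination (1 / 2) * h1 - (1 / 2) * h3 - w * B 3 * h.2.1
  have hB4 : B 4 = a * B 5 := mul_right_cancel₀ (mul_ne_zero hk (pow_ne_zero 2 hw0)) <| by
    linear_combination (1 / 2) * h1 - (1 / 2) * h2 - w ^ 2 * B 5 * h.2.1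
  have hsum : a + q ≠ 0 := by
    rw [h.add_eq_neg_two_mul hl]
    exact neg_ne_zero.mpr (mul_ne_zero two_ne_zero hl0)
  refine ⟨hB0, hB2, hB4, (mul_eq_zero.mp ?_).resolve_left hsum⟩
  linear_combination (1 / 2) * h1 - hB0 - w * hB2 - w ^ 2 * hB4

theorem coords_of_fderiv_lineV_eq_zero (h : lineEqs8 l m q a c d) (hl0 : l ≠ 0)
    (hl : l ^ 2 ≠ 1) (hm : m ^ 2 ≠ 1) {B : Fin 8 → ℂ} (hB0 : B 0 = a * B 1)
    (hB2 : B 2 = a * B 3) (hB4 : B 4 = a * B 5)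
    (h1 : fderiv ℂ (Q1 m) (lineV a c d) B = 0) (h2 : fderiv ℂ (Q2 l) (lineV a c d) B = 0) :
    B 6 = (B 1 + B 3 + B 5) / 3 * c ∧ B 7 = (B 1 + B 3 + B 5) / 3 * d := by
  rw [fderiv_Q1_apply] at h1
  rw [fderiv_Q2_apply] at h2
  simp only [lineV, Matrix.cons_val] at h1 h2
  set S := B 1 + B 3 + B 5
  have ha2 := h.sq_add_mul_add_one_eq_zero hl
  have hcd := h.sq_add_sq_eq hl
  have hmcd := h.two_mul_mul_mul_eq hl
  have hm0 : m ≠ 0 := by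
    rintro rfl
    exact h.six_mul_mul_ne_zero hl0 hl (by linear_combination hmcd)
  have hdet : m * (c ^ 2 - d ^ 2) ≠ 0 := mul_ne_zero hm0 (h.sq_sub_sq_ne_zero hl0 hl hm)
  have hI : c * B 6 + d * B 7 = 2 * l * a * S := by
    linear_combination (1 / 2) * h2 - a * hB0 - a * hB2 + l * hB4 - (B 1 + B 3) * ha2
  have hII : m * (d * B 6 + c * B 7) = -(2 * l * a * S) := by
    linear_combination (-1 / 2) * h1 + a * hB0 + a * hB2 + a * hB4 + S * ha2
  constructor
  · refine mul_left_cancel₀ hdet ?_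
    linear_combination m * c * hI - d * hII - S / 3 * m * c * hcd + S / 3 * d * hmcd
  · refine mul_left_cancel₀ hdet ?_
    linear_combination -m * d * hI + c * hII + S / 3 * m * d * hcd - S / 3 * c * hmcd

theorem mem_linePlane8_of_fderiv_eq_zero {w : ℂ} (hw : w ^ 2 + w + 1 = 0)
    (h : lineEqs8 l m q a c d) (hl0 : l ≠ 0) (hl : l ^ 2 ≠ 1) (hm : m ^ 2 ≠ 1)
    {B : Fin 8 → ℂ}
    (hB : ∀ x ∈ linePlane8 w q a c d, fderiv ℂ (Q1 m) x B = 0 ∧ fderiv ℂ (Q2 l) x B = 0 ∧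
      fderiv ℂ (Q3 l) x B = 0 ∧ fderiv ℂ (Q4 l) x B = 0) :
    B ∈ linePlane8 w q a c d := by
  obtain ⟨hu1, hu2, hu3, hu4⟩ := hB _ (lineU_mem_linePlane8 w q a c d)
  obtain ⟨hv1, hv2, -, -⟩ := hB _ (lineV_mem_linePlane8 w q a c d)
  obtain ⟨hB0, hB2, hB4, hodd⟩ := h.coords_of_fderiv_lineU_eq_zero hw hl0 hl hu1 hu2 hu3 hu4
  obtain ⟨hB6, hB7⟩ := h.coords_of_fderiv_lineV_eq_zero hl0 hl hm hB0 hB2 hB4 hv1 hv2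
  exact mem_linePlane8_of_coords hw (h.mul_eq_one hl) hB0 hB2 hB4 hodd hB6 hB7

theorem fderiv_normalLift_eq_zero {w : ℂ} (hw : w ^ 2 + w + 1 = 0)
    (h : lineEqs8 l m q a c d) (hl0 : l ≠ 0) (hl : l ^ 2 ≠ 1) {x : Fin 8 → ℂ}
    (hx : x ∈ linePlane8 w q a c d) :
    fderiv ℂ (Q1 m) x (normalLift w l a c d x) = 0 ∧
      fderiv ℂ (Q2 l) x (normalLift w l a c d x) = 0 ∧
      fderiv ℂ (Q3 l) x (normalLift w l a c d x) = 0 ∧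
      fderiv ℂ (Q4 l) x (normalLift w l a c d x) = 0 := by
  have hw1 : w ≠ 1 := by rintro rfl; norm_num at hw
  have haq := h.mul_eq_one hl
  have ha2 := h.sq_add_mul_add_one_eq_zero hl
  have hcd := h.sq_add_sq_eq hl
  obtain ⟨s, t, rfl⟩ : ∃ s t : ℂ, s • lineU w q + t • lineV a c d = x :=
    Submodule.mem_span_pair.mp hx
  rw [map_add, map_smul, map_smul, normalLift_lineU hw1,
    normalLift_lineV hcd (h.six_mul_mul_ne_zero hl0 hl)]
  rw [fderiv_Q1_apply, fderiv_Q2_apply, fderiv_Q3_apply, fderiv_Q4_apply]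
  simp only [lineU, lineV, normalU, normalV, Pi.add_apply, Pi.smul_apply, smul_eq_mul,
    Matrix.cons_val]
  refine ⟨?_, ?_, ?_, ?_⟩
  · linear_combination (-2 * s * t) * h.2.2.1 + (6 * s * t) * haq
      + (4 * s * t * (a ^ 2 + a * q) * (w - 1) + 2 * t ^ 2 * (a ^ 3 + a)) * hw
  · linear_combination (4 * s * t - 2 * w * a * t ^ 2) * ha2 + (s * t * (4 - 2 * l * a)) * haq
      + (2 * s * t) * hcd
      + (2 * s * t * ((a ^ 2 + a * q) - l * (a + a ^ 2 * q)) * (w - 1)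
        + 2 * t ^ 2 * (a ^ 3 + a)) * hw
  · linear_combination (4 * s * t - 2 * w ^ 2 * a * t ^ 2) * ha2
      + (s * t * (4 - 2 * l * a)) * haq + (2 * s * t) * hcd
      + (2 * s * t * ((a ^ 2 + a * q) - l * (a + a ^ 2 * q)) * (w - 1)
        + 2 * t ^ 2 * (a ^ 3 + a)) * hw
  · linear_combination (4 * s * t - 2 * a * t ^ 2) * ha2 + (s * t * (4 - 2 * l * a)) * haq
      + (2 * s * t) * hcd + (4 * s * t * (a ^ 2 + a * q) * (w - 1) + 2 * t ^ 2 * (a ^ 3 + a)) * hw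

end lineEqs8

theorem stmt_17 (w : ℂ) (hw : IsPrimitiveRoot w 3) :
    ∃ P : MvPolynomial (Fin 2) ℂ, P ≠ 0 ∧
      ∀ l m : ℂ, MvPolynomial.eval ![l, m] P ≠ 0 →
        ∀ q a c d : ℂ, lineEqs8 l m q a c d →
          ((∀ B : Fin 8 → ℂ,
              (∀ x ∈ linePlane8 w q a c d,
                fderiv ℂ (Q1 m) x B = 0 ∧ fderiv ℂ (Q2 l) x B = 0 ∧
                fderiv ℂ (Q3 l) x B = 0 ∧ fderiv ℂ (Q4 l) x B = 0) →
              B ∈ linePlane8 w q a c d) ∧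
            ∃ β : (linePlane8 w q a c d) →ₗ[ℂ] (Fin 8 → ℂ),
              ¬ (LinearMap.range β ≤ linePlane8 w q a c d) ∧
              ∀ x : linePlane8 w q a c d,
                fderiv ℂ (Q1 m) (x : Fin 8 → ℂ) (β x) = 0 ∧
                fderiv ℂ (Q2 l) (x : Fin 8 → ℂ) (β x) = 0 ∧
                fderiv ℂ (Q3 l) (x : Fin 8 → ℂ) (β x) = 0 ∧
                fderiv ℂ (Q4 l) (x : Fin 8 → ℂ) (β x) = 0) := by
  open MvPolynomial in
  refine ⟨X 0 * (X 0 ^ 2 - 1) * (X 1 ^ 2 - 1), fun h0 => ?_, ?_⟩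
  · have h2 := congrArg (eval ![(2 : ℂ), 2]) h0
    norm_num at h2
  intro l m hP q a c d h
  obtain ⟨hl0, hl, hm⟩ : l ≠ 0 ∧ l ^ 2 ≠ 1 ∧ m ^ 2 ≠ 1 := by
    simpa [sub_eq_zero, not_or, and_assoc] using hP
  have hw3 := hw.sq_add_self_add_one_eq_zero
  have hw1 : w ≠ 1 := hw.ne_one (by norm_num)
  refine ⟨fun B => h.mem_linePlane8_of_fderiv_eq_zero hw3 hl0 hl hm,
    (normalLift w l a c d).comp (linePlane8 w q a c d).subtype, fun hle => ?_,
    fun x => h.fderiv_normalLift_eq_zero hw3 hl0 hl x.2⟩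
  have hcd : c ≠ 0 ∨ d ≠ 0 := by
    by_contra! hcd
    apply h.six_mul_mul_ne_zero hl0 hl
    rw [← h.sq_add_sq_eq hl, hcd.1, hcd.2]
    ring
  exact normalU_notMem_linePlane8 hw1 (left_ne_zero_of_mul_eq_one (h.mul_eq_one hl)) hcd
    (hle ⟨⟨lineU w q, lineU_mem_linePlane8 w q a c d⟩, normalLift_lineU hw1 l q a c d⟩)
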